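/- arXiv:2302.01815 — 2 statements merged into one kernel-verified Lean document; each statement's English description precedes it below -/
import Mathlib

section
/- For any MM instance and any k ∈ ℕ: if there exists a capacity increase vector r : W → ℕ with max_w r(w) ≤ k such that the instance with capacities q + r admits a stable and perfect matching, then the instance with capacities q(w) + k for every school w admits a stable and perfect matching. Consequently, the minimum of max_w r(w) over all r for which q + r admits a stable and perfect matching equals the least k ∈ ℕ such that the uniform increase by k admits a stable and perfect matching. -/
/-!
Basic framework for many-to-one matching (MM) instances with two-sided
preferences, following the paper "Optimal Capacity Modification for
Many-to-One Matching Problems".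

Preference/priority orders are encoded by rank functions (`rkS`, `rkW`):
a smaller rank means more preferred; ranks are required to be injective
on the respective sets of acceptable partners.
-/

structure MM (U W : Type*) [Fintype U] [Fintype W] [DecidableEq U] [DecidableEq W] where
  /-- acceptable schools of a student -/
  accS : U → Finset W
  /-- students on a school's priority list -/
  accW : W → Finset U
  /-- every student has a nonempty preference list -/
  acc_ne : ∀ u, (accS u).Nonempty
  /-- mutual acceptability -/
  acc_iff : ∀ u w, u ∈ accW w ↔ w ∈ accS u
  /-- rank of a school in a student's list (smaller = better) -/
  rkS : U → W → ℕ
  /-- rank of a student in a school's priority list (smaller = better) -/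
  rkW : W → U → ℕ
  rkS_inj : ∀ u, ∀ w1 ∈ accS u, ∀ w2 ∈ accS u, rkS u w1 = rkS u w2 → w1 = w2
  rkW_inj : ∀ w, ∀ u1 ∈ accW w, ∀ u2 ∈ accW w, rkW w u1 = rkW w u2 → u1 = u2
  /-- capacities -/
  q : W → ℕ
  q_pos : ∀ w, 1 ≤ q w

namespace MM

variable {U W : Type*} [Fintype U] [Fintype W] [DecidableEq U] [DecidableEq W]

/-- `μ` is a (partial) matching: it assigns only acceptable schools. -/
def IsMatching (I : MM U W) (μ : U → Option W) : Prop :=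
  ∀ u w, μ u = some w → w ∈ I.accS u

/-- the set of students assigned to school `w` -/
def assignedTo (μ : U → Option W) (w : W) : Set U := {u | μ u = some w}

/-- the number of students assigned to school `w` -/
noncomputable def load (μ : U → Option W) (w : W) : ℕ := (assignedTo μ w).ncard

/-- `μ` is feasible: it is a matching respecting all capacities. -/
def Feasible (I : MM U W) (μ : U → Option W) : Prop :=
  I.IsMatching μ ∧ ∀ w, load μ w ≤ I.q w

/-- `μ` is perfect: every student is matched. -/
def Perfect (μ : U → Option W) : Prop := ∀ u, μ u ≠ none

/-- student `u` strictly prefers school `w` to the outcome `o`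
(where `o = none` means being unmatched) -/
def PrefOut (I : MM U W) (u : U) (w : W) (o : Option W) : Prop :=
  o = none ∨ ∃ w', o = some w' ∧ I.rkS u w < I.rkS u w'

/-- `(u,w)` is a blocking pair of `μ` -/
def Blocks (I : MM U W) (μ : U → Option W) (u : U) (w : W) : Prop :=
  u ∈ I.accW w ∧ I.PrefOut u w (μ u) ∧
    (load μ w < I.q w ∨ ∃ u' ∈ assignedTo μ w, I.rkW w u < I.rkW w u')

/-- `μ` is stable: feasible and with no blocking pair -/
def Stable (I : MM U W) (μ : U → Option W) : Prop :=
  I.Feasible μ ∧ ∀ u w, ¬ I.Blocks μ u w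

/-- student `u` is strictly better off under `μ` than under `σ` -/
def Better (I : MM U W) (u : U) (μ σ : U → Option W) : Prop :=
  ∃ w, μ u = some w ∧ I.PrefOut u w (σ u)

/-- student `u` weakly prefers `μ` to `σ` -/
def WeakPref (I : MM U W) (u : U) (μ σ : U → Option W) : Prop :=
  μ u = σ u ∨ I.Better u μ σ

/-- `μ` dominates `σ` -/
def Dominates (I : MM U W) (μ σ : U → Option W) : Prop :=
  (∀ u, I.WeakPref u μ σ) ∧ ∃ u, I.Better u μ σ

/-- `μ` is (Pareto-)efficient: feasible and dominated by no feasible matching -/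
def Efficient (I : MM U W) (μ : U → Option W) : Prop :=
  I.Feasible μ ∧ ∀ σ, I.Feasible σ → ¬ I.Dominates σ μ

/-- `μ` is a student-optimal stable matching -/
def StudentOptimal (I : MM U W) (μ : U → Option W) : Prop :=
  I.Stable μ ∧ ∀ σ, I.Stable σ → ∀ u, I.WeakPref u μ σ

/-- increase capacities by the vector `r` -/
def incCap (I : MM U W) (r : W → ℕ) : MM U W :=
  { I with
    q := fun w => I.q w + r w
    q_pos := fun w => le_trans (I.q_pos w) (Nat.le_add_right _ _) }

/-- replace the capacities by `q'` -/
def withCap (I : MM U W) (q' : W → ℕ) (hq' : ∀ w, 1 ≤ q' w) : MM U W :=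
  { I with
    q := q'
    q_pos := hq' }

/-- student `x` justifiedly envies student `y` under `σ` -/
def JEnvy (I : MM U W) (σ : U → Option W) (x y : U) : Prop :=
  ∃ w, σ y = some w ∧ x ∈ I.accW w ∧ I.rkW w x < I.rkW w y ∧ I.PrefOut x w (σ x)

/-- the set of students unmatched under `μ` -/
def unmatchedSet (μ : U → Option W) : Set U := {u | μ u = none}

/-- `v` is an assignment vector: it assigns to each student unmatched
under `μhat` an acceptable school -/
def IsAsgVec (I : MM U W) (μhat : U → Option W) (v : U → W) : Prop :=
  ∀ u, μhat u = none → v u ∈ I.accS u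

/-- `μhat + v` : additionally match every unmatched student `u` to `v u` -/
def extend (μhat : U → Option W) (v : U → W) : U → Option W :=
  fun u => some ((μhat u).getD (v u))

/-- JE(v): the assigned students who justifiedly envy some unassigned student
under `μhat + v` -/
def JEset (I : MM U W) (μhat : U → Option W) (v : U → W) : Set U :=
  {x | μhat x ≠ none ∧ ∃ y, μhat y = none ∧ I.JEnvy (extend μhat v) x y}

/-- `n_je(v)` -/
noncomputable def nje (I : MM U W) (μhat : U → Option W) (v : U → W) : ℕ :=
  (I.JEset μhat v).ncard

end MM

section Aux

variable {U W : Type*} [Fintype U] [Fintype W] [DecidableEq U] [DecidableEq W]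

/-- the "no justified envy" condition (capacity-independent part of stability) -/
def NoEnvy (J : MM U W) (σ : U → Option W) : Prop :=
  ∀ x w, x ∈ J.accW w → J.PrefOut x w (σ x) →
    ¬ ∃ y ∈ MM.assignedTo σ w, J.rkW w x < J.rkW w y

/-- rank-sum potential -/
noncomputable def rksum (J : MM U W) (σ : U → Option W) : ℕ :=
  ∑ u : U, (σ u).elim 0 (J.rkS u)

lemma key_lemma (J : MM U W) (μ0 : U → Option W)
    (hm : J.IsMatching μ0) (hcap : ∀ w, MM.load μ0 w ≤ J.q w) (hperf : MM.Perfect μ0)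
    (hne : NoEnvy J μ0) :
    ∃ σ, J.Stable σ ∧ MM.Perfect σ := by
  classical
  set P : (U → Option W) → Prop := fun σ =>
    J.IsMatching σ ∧ (∀ w, MM.load σ w ≤ J.q w) ∧ MM.Perfect σ ∧ NoEnvy J σ with hP
  have hS : rksum J μ0 ∈ {n | ∃ σ, P σ ∧ rksum J σ = n} :=
    ⟨μ0, ⟨hm, hcap, hperf, hne⟩, rfl⟩
  obtain ⟨σ, hPσ, hfσ⟩ := Nat.sInf_mem (Set.nonempty_of_mem hS)
  have hmin : ∀ σ', P σ' → rksum J σ ≤ rksum J σ' := by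
    intro σ' h'
    rw [hfσ]
    exact Nat.sInf_le ⟨σ', h', rfl⟩
  obtain ⟨hmσ, hcσ, hpσ, hneσ⟩ := hPσ
  refine ⟨σ, ⟨⟨hmσ, hcσ⟩, ?_⟩, hpσ⟩
  intro u w hb
  obtain ⟨hacc, hpref, hcase⟩ := hb
  rcases hcase with hslack | henvy
  swap
  · exact hneσ u w hacc hpref henvy
  -- slack case: build a better matching
  have hTne : J.rkW w u ∈ {n | ∃ x, (x ∈ J.accW w ∧ J.PrefOut x w (σ x)) ∧ J.rkW w x = n} :=
    ⟨u, ⟨hacc, hpref⟩, rfl⟩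
  obtain ⟨u', ⟨hacc', hpref'⟩, hru'⟩ := Nat.sInf_mem (Set.nonempty_of_mem hTne)
  have hminr : ∀ x, x ∈ J.accW w → J.PrefOut x w (σ x) → J.rkW w u' ≤ J.rkW w x := by
    intro x h1 h2
    rw [hru']
    exact Nat.sInf_le ⟨x, ⟨h1, h2⟩, rfl⟩
  obtain ⟨w0, hw0⟩ : ∃ w0, σ u' = some w0 := by
    cases h : σ u' with
    | none => exact absurd h (hpσ u')
    | some w0 => exact ⟨w0, rfl⟩
  have hlt0 : J.rkS u' w < J.rkS u' w0 := by
    rcases hpref' with h | ⟨w', hw', hlt⟩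
    · rw [hw0] at h; exact absurd h (by simp)
    · rw [hw0] at hw'
      injection hw' with hw''
      rw [hw'']
      exact hlt
  have hw0ne : w0 ≠ w := by
    intro h; rw [h] at hlt0; exact lt_irrefl _ hlt0
  set σ' : U → Option W := Function.update σ u' (some w) with hσ'
  have hσ'u' : σ' u' = some w := Function.update_self _ _ _
  have hσ'x : ∀ x, x ≠ u' → σ' x = σ x := fun x hx => Function.update_of_ne hx _ _
  have hnm : u' ∉ MM.assignedTo σ w := by
    intro h
    have : σ u' = some w := h
    rw [hw0] at this
    exact hw0ne (by injection this)
  have hins : MM.assignedTo σ' w = insert u' (MM.assignedTo σ w) := by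
    ext x
    by_cases hx : x = u'
    · subst hx
      simp [MM.assignedTo, hσ'u']
    · simp only [MM.assignedTo, Set.mem_insert_iff, Set.mem_setOf_eq, hσ'x x hx]
      tauto
  have hP' : P σ' := by
    refine ⟨?_, ?_, ?_, ?_⟩
    · -- IsMatching
      intro x wx hx
      by_cases hxu : x = u'
      · rw [hxu, hσ'u'] at hx
        injection hx with hx
        rw [hxu, ← hx]
        exact (J.acc_iff u' w).1 hacc'
      · rw [hσ'x x hxu] at hx
        exact hmσ x wx hx
    · -- capacities
      intro w'
      by_cases hww : w' = w
      · subst hww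
        rw [MM.load, hins, Set.ncard_insert_of_notMem hnm (Set.toFinite _)]
        exact hslack
      · have hsub : MM.assignedTo σ' w' ⊆ MM.assignedTo σ w' := by
          intro x hx
          have hxne : x ≠ u' := by
            intro h
            have h2 : σ' u' = some w' := h ▸ hx
            rw [hσ'u'] at h2
            injection h2 with h2
            exact hww h2.symm
          have : σ' x = some w' := hx
          rw [hσ'x x hxne] at this
          exact this
        exact le_trans (Set.ncard_le_ncard hsub (Set.toFinite _)) (hcσ w')
    · -- Perfect
      intro x
      by_cases hxu : x = u'
      · rw [hxu, hσ'u']; simp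
      · rw [hσ'x x hxu]; exact hpσ x
    · -- NoEnvy
      rintro x wx hxacc hxpref ⟨y, hy, hylt⟩
      have hyw : σ' y = some wx := hy
      by_cases hyu : y = u'
      · rw [hyu, hσ'u'] at hyw
        injection hyw with hyw
        by_cases hxu : x = u'
        · rcases hxpref with h | ⟨w', hw', hlt⟩
          · rw [hxu, hσ'u'] at h; exact absurd h (by simp)
          · rw [hxu, hσ'u'] at hw'
            injection hw' with hw'
            rw [← hw', ← hyw] at hlt
            exact lt_irrefl _ hlt
        · rw [hσ'x x hxu] at hxpref
          rw [← hyw] at hxpref hxacc hylt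
          rw [hyu] at hylt
          exact absurd hylt (not_lt.2 (hminr x hxacc hxpref))
      · have hyσ : y ∈ MM.assignedTo σ wx := by
          have h2 : σ' y = σ y := hσ'x y hyu
          have h3 : σ y = some wx := by rw [← h2]; exact hyw
          exact h3
        by_cases hxu : x = u'
        · have hlt1 : J.rkS u' wx < J.rkS u' w := by
            rcases hxpref with h | ⟨w', hw', hlt⟩
            · rw [hxu, hσ'u'] at h; exact absurd h (by simp)
            · rw [hxu, hσ'u'] at hw'
              injection hw' with hw'
              rw [← hw', hxu] at hlt
              exact hlt
          have hpo : J.PrefOut u' wx (σ u') := Or.inr ⟨w0, hw0, lt_trans hlt1 hlt0⟩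
          rw [hxu] at hxacc hylt
          exact hneσ u' wx hxacc hpo ⟨y, hyσ, hylt⟩
        · rw [hσ'x x hxu] at hxpref
          exact hneσ x wx hxacc hxpref ⟨y, hyσ, hylt⟩
  have hlt : rksum J σ' < rksum J σ := by
    apply Finset.sum_lt_sum
    · intro i _
      by_cases hiu : i = u'
      · rw [hiu, hσ'u', hw0]
        exact le_of_lt hlt0
      · rw [hσ'x i hiu]
    · refine ⟨u', Finset.mem_univ _, ?_⟩
      rw [hσ'u', hw0]
      exact hlt0
  exact absurd (hmin σ' hP') (not_le.2 hlt)

end Aux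

/-- Theorem 3.10: for the minimax objective, uniform
capacity increases suffice; consequently the minimum of `max_w r(w)` over good
capacity increase vectors equals the least `k` whose uniform increase is good. -/
theorem statement_13 {U W : Type*} [Fintype U] [Fintype W] [DecidableEq U] [DecidableEq W]
    (I : MM U W) (k : ℕ) :
    ((∃ r : W → ℕ, (∀ w, r w ≤ k) ∧
        ∃ μ : U → Option W, (I.incCap r).Stable μ ∧ MM.Perfect μ) →
      ∃ μ : U → Option W, (I.incCap (fun _ => k)).Stable μ ∧ MM.Perfect μ) ∧
    sInf {s : ℕ | ∃ r : W → ℕ, Finset.univ.sup r = s ∧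
        ∃ μ : U → Option W, (I.incCap r).Stable μ ∧ MM.Perfect μ}
      = sInf {k' : ℕ |
          ∃ μ : U → Option W, (I.incCap (fun _ => k')).Stable μ ∧ MM.Perfect μ} := by
  classical
  have part1 : ∀ k0 : ℕ, (∃ r : W → ℕ, (∀ w, r w ≤ k0) ∧
      ∃ μ : U → Option W, (I.incCap r).Stable μ ∧ MM.Perfect μ) →
      ∃ μ : U → Option W, (I.incCap (fun _ => k0)).Stable μ ∧ MM.Perfect μ := by
    rintro k0 ⟨r, hr, μ, ⟨⟨hm, hc⟩, hnb⟩, hperf⟩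
    apply key_lemma (I.incCap fun _ => k0) μ
    · exact hm
    · intro w
      calc MM.load μ w ≤ I.q w + r w := hc w
        _ ≤ I.q w + k0 := by have := hr w; omega
    · exact hperf
    · intro x w hacc hpref henvy
      exact hnb x w ⟨hacc, hpref, Or.inr henvy⟩
  constructor
  · exact part1 k
  · set A := {s : ℕ | ∃ r : W → ℕ, Finset.univ.sup r = s ∧
        ∃ μ : U → Option W, (I.incCap r).Stable μ ∧ MM.Perfect μ} with hA
    set B := {k' : ℕ |
        ∃ μ : U → Option W, (I.incCap (fun _ => k')).Stable μ ∧ MM.Perfect μ} with hB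
    have hAB : A ⊆ B := by
      rintro s ⟨r, hsup, μ, hst, hperf⟩
      exact part1 s ⟨r, fun w => hsup ▸ Finset.le_sup (Finset.mem_univ w), μ, hst, hperf⟩
    by_cases hBne : B.Nonempty
    · obtain ⟨b, hb⟩ := hBne
      have hAne : A.Nonempty := by
        by_cases hW : Nonempty W
        · refine ⟨b, fun _ => b, ?_, hb⟩
          exact Finset.sup_const Finset.univ_nonempty _
        · -- W empty; then U is empty (since accS u is a nonempty finset in W)
          have hU : IsEmpty U := by
            constructor
            intro u
            obtain ⟨w, _⟩ := I.acc_ne u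
            exact hW ⟨w⟩
          refine ⟨0, fun _ => 0, ?_, fun _ => none, ⟨⟨?_, ?_⟩, ?_⟩, ?_⟩
          · have : (Finset.univ : Finset W) = ∅ := by
              ext w; exact absurd ⟨w⟩ hW
            rw [this, Finset.sup_empty]
            rfl
          · intro u; exact hU.elim u
          · intro w; exact absurd ⟨w⟩ hW
          · intro u; exact hU.elim u
          · intro u; exact hU.elim u
      apply le_antisymm
      · -- sInf A ≤ sInf B
        have hsB : sInf B ∈ B := Nat.sInf_mem ⟨b, hb⟩
        by_cases hW : Nonempty W
        · apply Nat.sInf_le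
          exact ⟨fun _ => sInf B, Finset.sup_const Finset.univ_nonempty _, hsB⟩
        · obtain ⟨a, ha⟩ := hAne
          have ha0 : a = 0 := by
            obtain ⟨r, hsup, _⟩ := ha
            have : (Finset.univ : Finset W) = ∅ := by
              ext w; exact absurd ⟨w⟩ hW
            rw [this, Finset.sup_empty] at hsup
            exact hsup.symm
          calc sInf A ≤ a := Nat.sInf_le ha
            _ = 0 := ha0
            _ ≤ sInf B := Nat.zero_le _
      · exact Nat.sInf_le (hAB (Nat.sInf_mem hAne))
    · have hAe : A = ∅ := by
        rw [Set.eq_empty_iff_forall_notMem]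
        intro s hs
        exact hBne ⟨s, hAB hs⟩
      rw [Set.not_nonempty_iff_eq_empty] at hBne
      rw [hAe, hBne]
end

section
/- Consider the MM instance with students u_1,…,u_5 and schools w_1,…,w_5, each school of capacity 1, where the preference lists are u_1: w_1 ≻ w_3 ≻ w_4; u_2: w_1 ≻ w_2; u_3: w_2 ≻ w_1 ≻ w_3; u_4: w_2 ≻ w_3 ≻ w_5; u_5: w_3 ≻ w_2 ≻ w_1, and the priority orders are w_1: u_5 ≻ u_3 ≻ u_2 ≻ u_1; w_2: u_2 ≻ u_5 ≻ u_3 ≻ u_4; w_3: u_3 ≻ u_4 ≻ u_1 ≻ u_5; w_4: u_1; w_5: u_4. Then for every capacity increase vector r : {w_1,…,w_5} → ℕ with Σ_w r(w) ≤ 1, the instance with capacities q + r admits no matching that is both stable and efficient. -/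
/-- The instance of Example 4.1: five students `u_1, …, u_5` (indices `0,…,4`)
and five schools `w_1, …, w_5` (indices `0,…,4`), all capacities one. -/
def I14 : MM (Fin 5) (Fin 5) where
  accS := ![{0, 2, 3}, {0, 1}, {0, 1, 2}, {1, 2, 4}, {0, 1, 2}]
  accW := ![{0, 1, 2, 4}, {1, 2, 3, 4}, {0, 2, 3, 4}, {0}, {3}]
  acc_ne := by decide
  acc_iff := by decide
  rkS := ![![0, 3, 1, 2, 4], ![0, 1, 2, 3, 4], ![1, 0, 2, 3, 4],
           ![3, 0, 1, 4, 2], ![2, 1, 0, 3, 4]]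
  rkW := ![![3, 2, 1, 4, 0], ![4, 0, 2, 3, 1], ![2, 4, 0, 1, 3],
           ![0, 1, 2, 3, 4], ![1, 2, 3, 0, 4]]
  rkS_inj := by decide
  rkW_inj := by decide
  q := fun _ => 1
  q_pos := fun _ => le_rfl


section Aux

lemma load_eq_card {U W : Type*} [Fintype U] [DecidableEq W]
    (μ : U → Option W) (w : W) :
    MM.load μ w = (Finset.univ.filter fun u => μ u = some w).card := by
  rw [MM.load, MM.assignedTo, ← Set.ncard_coe_finset]
  congr 1
  ext u; simp

/-! Fast boolean checkers for the 5-student, 5-school case. -/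

def stuL : List (Fin 5) := [0, 1, 2, 3, 4]
def optL : List (Option (Fin 5)) := [none, some 0, some 1, some 2, some 3, some 4]

lemma mem_stuL : ∀ u : Fin 5, u ∈ stuL := by decide
lemma mem_optL : ∀ o : Option (Fin 5), o ∈ optL := by decide

lemma all_fin {p : Fin 5 → Bool} : stuL.all p = true ↔ ∀ u, p u = true := by
  rw [List.all_eq_true]
  exact ⟨fun h u => h u (mem_stuL u), fun h u _ => h u⟩

lemma any_fin {p : Fin 5 → Bool} : stuL.any p = true ↔ ∃ u, p u = true := by
  rw [List.any_eq_true]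
  exact ⟨fun ⟨u, _, h⟩ => ⟨u, h⟩, fun ⟨u, h⟩ => ⟨u, mem_stuL u, h⟩⟩

lemma all_opt {p : Option (Fin 5) → Bool} : optL.all p = true ↔ ∀ o, p o = true := by
  rw [List.all_eq_true]
  exact ⟨fun h o => h o (mem_optL o), fun h o _ => h o⟩

lemma any_opt {p : Option (Fin 5) → Bool} : optL.any p = true ↔ ∃ o, p o = true := by
  rw [List.any_eq_true]
  exact ⟨fun ⟨o, _, h⟩ => ⟨o, h⟩, fun ⟨o, h⟩ => ⟨o, mem_optL o, h⟩⟩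

def loadB (μ : Fin 5 → Option (Fin 5)) (w : Fin 5) : ℕ :=
  (if μ 0 = some w then 1 else 0) + (if μ 1 = some w then 1 else 0) +
  (if μ 2 = some w then 1 else 0) + (if μ 3 = some w then 1 else 0) +
  (if μ 4 = some w then 1 else 0)

lemma load_eq_loadB (μ : Fin 5 → Option (Fin 5)) (w : Fin 5) :
    MM.load μ w = loadB μ w := by
  rw [load_eq_card, Finset.card_filter, Fin.sum_univ_five]
  rfl

variable (I : MM (Fin 5) (Fin 5))

def matchOkB (μ : Fin 5 → Option (Fin 5)) : Bool :=
  stuL.all fun u =>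
    match μ u with
    | none => true
    | some w => decide (w ∈ I.accS u)

lemma matchOkB_iff (μ : Fin 5 → Option (Fin 5)) :
    matchOkB I μ = true ↔ I.IsMatching μ := by
  rw [matchOkB, all_fin]
  constructor
  · intro h u w hw
    have := h u
    rw [hw] at this
    exact of_decide_eq_true this
  · intro h u
    cases hu : μ u with
    | none => simp
    | some w => simpa using h u w hu

def feasB (μ : Fin 5 → Option (Fin 5)) : Bool :=
  matchOkB I μ && stuL.all fun w => decide (loadB μ w ≤ I.q w)

lemma feasB_iff (μ : Fin 5 → Option (Fin 5)) :
    feasB I μ = true ↔ I.Feasible μ := by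
  rw [feasB, Bool.and_eq_true, matchOkB_iff, all_fin]
  simp [MM.Feasible, load_eq_loadB]

def prefB (u w : Fin 5) (o : Option (Fin 5)) : Bool :=
  match o with
  | none => true
  | some w' => decide (I.rkS u w < I.rkS u w')

lemma prefB_iff (u w : Fin 5) (o : Option (Fin 5)) :
    prefB I u w o = true ↔ I.PrefOut u w o := by
  cases o <;> simp [prefB, MM.PrefOut]

def blocksB (μ : Fin 5 → Option (Fin 5)) (u w : Fin 5) : Bool :=
  decide (u ∈ I.accW w) && prefB I u w (μ u) &&
    (decide (loadB μ w < I.q w) ||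
      stuL.any fun u' => decide (μ u' = some w) && decide (I.rkW w u < I.rkW w u'))

lemma blocksB_iff (μ : Fin 5 → Option (Fin 5)) (u w : Fin 5) :
    blocksB I μ u w = true ↔ I.Blocks μ u w := by
  rw [blocksB]
  simp [MM.Blocks, MM.assignedTo, load_eq_loadB, any_fin, prefB_iff,
    Set.mem_setOf_eq, and_assoc, mem_stuL]

lemma blocksB_false (μ : Fin 5 → Option (Fin 5)) (u w : Fin 5) :
    blocksB I μ u w = false ↔ ¬ I.Blocks μ u w := by
  rw [← blocksB_iff]; simp

def stableB (μ : Fin 5 → Option (Fin 5)) : Bool :=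
  feasB I μ && stuL.all fun u => stuL.all fun w => ! blocksB I μ u w

lemma stableB_iff (μ : Fin 5 → Option (Fin 5)) :
    stableB I μ = true ↔ I.Stable μ := by
  rw [stableB, Bool.and_eq_true, feasB_iff, all_fin, MM.Stable]
  simp only [all_fin, Bool.not_eq_true', blocksB_false]

def betterB (u : Fin 5) (μ σ : Fin 5 → Option (Fin 5)) : Bool :=
  match μ u with
  | none => false
  | some w => prefB I u w (σ u)

lemma betterB_iff (u : Fin 5) (μ σ : Fin 5 → Option (Fin 5)) :
    betterB I u μ σ = true ↔ I.Better u μ σ := by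
  cases hμ : μ u <;> simp [betterB, MM.Better, hμ, prefB_iff]

def weakB (u : Fin 5) (μ σ : Fin 5 → Option (Fin 5)) : Bool :=
  decide (μ u = σ u) || betterB I u μ σ

def domB (μ σ : Fin 5 → Option (Fin 5)) : Bool :=
  (stuL.all fun u => weakB I u μ σ) && stuL.any fun u => betterB I u μ σ

lemma domB_iff (μ σ : Fin 5 → Option (Fin 5)) :
    domB I μ σ = true ↔ I.Dominates μ σ := by
  simp [domB, weakB, MM.Dominates, MM.WeakPref, all_fin, any_fin, betterB_iff, mem_stuL]

/-- boolean check: every stable matching is dominated by some feasible matching -/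
def keyB : Bool :=
  optL.all fun a => optL.all fun b => optL.all fun c => optL.all fun d => optL.all fun e =>
    !stableB I ![a, b, c, d, e] ||
      (optL.any fun a' => optL.any fun b' => optL.any fun c' =>
        optL.any fun d' => optL.any fun e' =>
          feasB I ![a', b', c', d', e'] &&
            domB I ![a', b', c', d', e'] ![a, b, c, d, e])

lemma vec5 {α : Type*} (f : Fin 5 → α) : f = ![f 0, f 1, f 2, f 3, f 4] := by
  funext i; fin_cases i <;> rfl

lemma keyB_imp (h : keyB I = true) :
    ∀ μ, ¬ (I.Stable μ ∧ I.Efficient μ) := by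
  rintro μ ⟨hs, he⟩
  rw [vec5 μ] at hs he
  rw [keyB] at h
  replace h := all_opt.mp (all_opt.mp (all_opt.mp (all_opt.mp (all_opt.mp h
    (μ 0)) (μ 1)) (μ 2)) (μ 3)) (μ 4)
  rw [Bool.or_eq_true] at h
  rcases h with h | h
  · rw [Bool.not_eq_true'] at h
    have := (stableB_iff I _).mpr hs
    rw [h] at this
    exact Bool.false_ne_true this
  · obtain ⟨a', h⟩ := any_opt.mp h
    obtain ⟨b', h⟩ := any_opt.mp h
    obtain ⟨c', h⟩ := any_opt.mp h
    obtain ⟨d', h⟩ := any_opt.mp h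
    obtain ⟨e', h⟩ := any_opt.mp h
    rw [Bool.and_eq_true] at h
    exact he.2 _ ((feasB_iff I _).mp h.1) ((domB_iff I _ _).mp h.2)

lemma r_cases (r : Fin 5 → ℕ) (hr : (∑ w, r w) ≤ 1) :
    r = (fun _ => 0) ∨ ∃ w0, r = fun w => if w = w0 then 1 else 0 := by
  by_cases h : ∀ w, r w = 0
  · exact Or.inl (funext h)
  · right
    push_neg at h
    obtain ⟨w0, hw0⟩ := h
    have h1 : 1 ≤ r w0 := Nat.one_le_iff_ne_zero.mpr hw0
    refine ⟨w0, funext fun w => ?_⟩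
    by_cases hw : w = w0
    · subst hw
      have := Finset.single_le_sum (f := r) (fun i _ => Nat.zero_le _) (Finset.mem_univ w)
      rw [if_pos rfl]
      omega
    · have hpair : r w0 + r w = ∑ x ∈ ({w0, w} : Finset (Fin 5)), r x :=
        (Finset.sum_pair (Ne.symm hw)).symm
      have hsub : (∑ x ∈ ({w0, w} : Finset (Fin 5)), r x) ≤ ∑ x, r x :=
        Finset.sum_le_sum_of_subset (Finset.subset_univ _)
      rw [if_neg hw]
      omega

end Aux

set_option maxRecDepth 100000 in
set_option maxHeartbeats 1000000 in
/-- **Statement 14** (Example 4.1): even after increasing the total capacity by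
at most one, no stable and efficient matching exists. -/
theorem statement_14 :
    ∀ r : Fin 5 → ℕ, (∑ w, r w) ≤ 1 →
      ∀ μ : Fin 5 → Option (Fin 5),
        ¬ ((I14.incCap r).Stable μ ∧ (I14.incCap r).Efficient μ) := by
  intro r hr
  rcases r_cases r hr with h0 | ⟨w0, hw0⟩
  · subst h0; exact keyB_imp _ (by decide)
  · subst hw0; fin_cases w0 <;> exact keyB_imp _ (by decide)
end
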